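/- arXiv:2208.02330 — 2 statements merged into one kernel-verified Lean document; each statement's English description precedes it below -/
import Mathlib

section
/- Let Y and Ȳ be sets of strings such that Y dominates Ȳ, i.e., there is a single symbol mapping η such that every ȳ ∈ Ȳ equals η(y) for some y ∈ Y. Assuming every string has a unique duplication root (with respect to deduplications of length at most 3), the number of distinct duplication roots of strings in Ȳ is at most the number of distinct duplication roots of strings in Y. -/
/-- A single deduplication of length at most 3: replace a tandem repeat `v ++ v`
(`v` nonempty, `|v| ≤ 3`) by `v`. -/
def IsDedup {α : Type*} (x y : List α) : Prop :=
  ∃ u v w : List α, x = u ++ v ++ v ++ w ∧ y = u ++ v ++ w ∧ v ≠ [] ∧ v.length ≤ 3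

/-- Irreducible: no tandem repeat `v ++ v` with `v` nonempty of length at most 3. -/
def Irred {α : Type*} (x : List α) : Prop :=
  ∀ u v w : List α, x = u ++ v ++ v ++ w → v.length ≤ 3 → v = []

/-- If a set `Y` of strings dominates a set `Yb` (via a single symbol mapping `η`),
and duplication roots are unique (given here by root functions `RtA`, `RtB` together
with their defining properties), then the number of distinct duplication roots of
strings in `Yb` is at most that of strings in `Y`. -/
theorem stmt4 {A B : Type u} (η : A → B)
    (RtA : List A → List A) (RtB : List B → List B)
    (hA1 : ∀ x, Relation.ReflTransGen IsDedup x (RtA x))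
    (hA2 : ∀ x, Irred (RtA x))
    (hA3 : ∀ x r, Relation.ReflTransGen IsDedup x r → Irred r → r = RtA x)
    (hB1 : ∀ x, Relation.ReflTransGen IsDedup x (RtB x))
    (hB2 : ∀ x, Irred (RtB x))
    (hB3 : ∀ x r, Relation.ReflTransGen IsDedup x r → Irred r → r = RtB x)
    (Y : Set (List A)) (Yb : Set (List B))
    (hdom : ∀ yb ∈ Yb, ∃ y ∈ Y, yb = y.map η) :
    Cardinal.mk ↥(RtB '' Yb) ≤ Cardinal.mk ↥(RtA '' Y) := by
  have hmap : ∀ x y : List A, IsDedup x y → IsDedup (x.map η) (y.map η) := by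
    rintro x y ⟨u, v, w, hx, hy, hv, hl⟩
    exact ⟨u.map η, v.map η, w.map η, by simp [hx], by simp [hy],
      by simpa using hv, by simpa using hl⟩
  have key : ∀ y : List A, RtB ((RtA y).map η) = RtB (y.map η) := fun y =>
    hB3 _ _ (((hA1 y).lift (List.map η) hmap).trans (hB1 _)) (hB2 _)
  choose ybf hybf heq using fun z : ↥(RtB '' Yb) => z.2
  choose yf hyf hmapeq using fun z => hdom (ybf z) (hybf z)
  apply Cardinal.mk_le_of_injective
    (f := fun z => (⟨RtA (yf z), Set.mem_image_of_mem _ (hyf z)⟩ : ↥(RtA '' Y)))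
  intro z1 z2 h
  have h' : RtA (yf z1) = RtA (yf z2) := congrArg Subtype.val h
  apply Subtype.ext
  calc (z1 : List B) = RtB (ybf z1) := (heq z1).symm
    _ = RtB ((yf z1).map η) := by rw [hmapeq z1]
    _ = RtB ((RtA (yf z1)).map η) := (key _).symm
    _ = RtB ((RtA (yf z2)).map η) := by rw [h']
    _ = RtB ((yf z2).map η) := key _
    _ = RtB (ybf z2) := by rw [hmapeq z2]
    _ = z2 := heq z2
end

section
/- Let x be an irreducible string of length n and r any string such that the concatenation xr is irreducible. Suppose w is obtained from R(the noisy channel output of xr) such that w differs from xr by at most p substring edits each of length at most L (as guaranteed for duplication roots). Then the prefix s of w of length n - pL belongs to the set of strings obtainable from x by at most p L-substring edits followed by deletion of a suffix of length at most 2pL. In particular, s is determined by x up to these operations, independently of r. -/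
/-- An `L`-substring edit: replace a substring `s` by `t`, `max(|s|,|t|) ≤ L`. -/
def SubEdit {α : Type*} (L : ℕ) (x y : List α) : Prop :=
  ∃ pre s t post : List α, x = pre ++ s ++ post ∧ y = pre ++ t ++ post ∧
    s.length ≤ L ∧ t.length ≤ L ∧ (s ≠ [] ∨ t ≠ [])

/-- At most `p` `L`-substring edits. -/
def EditsLE {α : Type*} (L p : ℕ) (x y : List α) : Prop :=
  ∃ f : ℕ → List α, f 0 = x ∧ f p = y ∧
    ∀ i < p, SubEdit L (f i) (f (i + 1)) ∨ f i = f (i + 1)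

lemma editsLE_snoc {α : Type*} {L p : ℕ} {x y z : List α}
    (h : EditsLE L p x y) (hz : SubEdit L y z ∨ y = z) : EditsLE L (p+1) x z := by
  obtain ⟨f, h0, hp, hstep⟩ := h
  refine ⟨fun i => if i ≤ p then f i else z, by simp [h0], by simp, ?_⟩
  intro i hi
  rcases Nat.lt_or_ge i p with h' | h'
  · have h1 : i ≤ p := h'.le
    have h2 : i + 1 ≤ p := h'
    simpa [h1, h2] using hstep i h'
  · obtain rfl : i = p := by omega
    have h2 : ¬ (i + 1 ≤ i) := by omega
    simp only [if_pos (le_refl i), if_neg h2, hp]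
    exact hz

lemma step_restrict {α : Type*} {L : ℕ} {x r w : List α} (h : SubEdit L (x ++ r) w) :
    ∃ v r' : List α, w = v ++ r' ∧ (SubEdit L x v ∨ x = v) ∧
      x.length ≤ v.length + L ∧ v.length ≤ x.length + L := by
  obtain ⟨pre, s, t, post, h1, h2, hs, ht, hne⟩ := h
  have hxpref : x <+: x ++ r := List.prefix_append x r
  have hprepref : pre <+: x ++ r := by rw [h1, List.append_assoc]; exact List.prefix_append _ _
  rcases le_or_gt x.length pre.length with hcase | hcase
  · -- edit entirely within r
    obtain ⟨pre', hpre'⟩ := List.prefix_of_prefix_length_le hxpref hprepref hcase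
    refine ⟨x, pre' ++ t ++ post, ?_, Or.inr rfl, Nat.le_add_right _ _, Nat.le_add_right _ _⟩
    rw [h2, ← hpre']; simp
  · rcases le_or_gt (pre.length + s.length) x.length with hcase2 | hcase2
    · -- edit entirely within x
      have hpspref : pre ++ s <+: x ++ r := by
        rw [h1]; simpa [List.append_assoc] using List.prefix_append (pre ++ s) post
      obtain ⟨mid, hmid⟩ := List.prefix_of_prefix_length_le hpspref hxpref
        (by simp only [List.length_append]; omega)
      have hx : x = pre ++ s ++ mid := by rw [← hmid]
      have hpost : post = mid ++ r := by
        have : pre ++ s ++ post = pre ++ s ++ (mid ++ r) := by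
          rw [← h1, hx]; simp [List.append_assoc]
        exact List.append_cancel_left this
      refine ⟨pre ++ t ++ mid, r, ?_, Or.inl ⟨pre, s, t, mid, hx, rfl, hs, ht, hne⟩, ?_, ?_⟩
      · rw [h2, hpost]; simp [List.append_assoc]
      · simp only [hx, List.length_append]; omega
      · simp only [hx, List.length_append]; omega
    · -- edit crosses the boundary
      have hpspref : pre ++ s <+: x ++ r := by
        rw [h1]; simpa [List.append_assoc] using List.prefix_append (pre ++ s) post
      obtain ⟨s2, hs2⟩ := List.prefix_of_prefix_length_le hxpref hpspref
        (by simp; omega)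
      obtain ⟨x2, hx2⟩ := List.prefix_of_prefix_length_le hprepref hxpref hcase.le
      have hr : r = s2 ++ post := by
        have : x ++ r = x ++ (s2 ++ post) := by
          rw [h1, ← hs2]; simp [List.append_assoc]
        exact List.append_cancel_left this
      have hsx2 : s = x2 ++ s2 := by
        have : pre ++ s = pre ++ (x2 ++ s2) := by
          rw [← hs2, ← hx2]; simp [List.append_assoc]
        exact List.append_cancel_left this
      have hx2len : x2.length ≤ L := by
        have := congrArg List.length hsx2
        simp only [List.length_append] at this; omega
      have hxform : x = pre ++ x2 ++ [] := by simp [← hx2]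
      have hlen : pre.length + x2.length = x.length := by
        have := congrArg List.length hx2
        simp only [List.length_append] at this
        exact this
      refine ⟨pre ++ t, post, ?_, ?_, ?_, ?_⟩
      · rw [h2]
      · by_cases hx2e : x2 = []
        · by_cases hte : t = []
          · right; simp [← hx2, hx2e, hte]
          · left; exact ⟨pre, x2, t, [], hxform, by simp, hx2len, ht, Or.inr hte⟩
        · left; exact ⟨pre, x2, t, [], hxform, by simp, hx2len, ht, Or.inl hx2e⟩
      · simp only [List.length_append]; omega
      · simp only [List.length_append]; omega

lemma key_restrict {α : Type*} {L : ℕ} : ∀ (p : ℕ) (x r w : List α),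
    EditsLE L p (x ++ r) w → ∃ v r' : List α, w = v ++ r' ∧ EditsLE L p x v ∧
      x.length ≤ v.length + p * L ∧ v.length ≤ x.length + p * L := by
  intro p
  induction p with
  | zero =>
    intro x r w h
    obtain ⟨f, h0, hp, _⟩ := h
    exact ⟨x, r, by rw [← hp, h0], ⟨fun _ => x, rfl, rfl, fun i hi => by omega⟩,
      by omega, by omega⟩
  | succ p ih =>
    intro x r w h
    obtain ⟨f, h0, hp, hstep⟩ := h
    obtain ⟨v0, r0, hfp, hv0, hlb, hub⟩ := ih x r (f p)
      ⟨f, h0, rfl, fun i hi => hstep i (by omega)⟩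
    have hmul : (p + 1) * L = p * L + L := by ring
    rcases hstep p (by omega) with hed | heq
    · rw [hp, hfp] at hed
      obtain ⟨v, r', hw, hv, hlb', hub'⟩ := step_restrict hed
      exact ⟨v, r', hw, editsLE_snoc hv0 hv, by omega, by omega⟩
    · rw [hp] at heq
      exact ⟨v0, r0, by rw [← heq, hfp], editsLE_snoc hv0 (Or.inr rfl), by omega, by omega⟩

/-- Let `x` be irreducible of length `n` with `x ++ r` irreducible, and let `w` differ
from `x ++ r` by at most `p` `L`-substring edits.  Then the prefix `s` of `w` of length
`n - pL` is obtainable from `x` by at most `p` `L`-substring edits followed by deletion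
of a suffix of length at most `2pL`. -/
theorem stmt12 {α : Type*} (p L n : ℕ)
    (x r w : List α) (hx_irr : Irred x) (hx_len : x.length = n)
    (hxr_irr : Irred (x ++ r))
    (hw : EditsLE L p (x ++ r) w) :
    ∃ v t : List α, EditsLE L p x v ∧ v = w.take (n - p * L) ++ t ∧
      t.length ≤ 2 * p * L := by
  obtain ⟨v, r', hwv, hv, hlb, hub⟩ := key_restrict p x r w hw
  have hmul : 2 * p * L = p * L + p * L := by ring
  set k := n - p * L with hk
  have hkv : k ≤ v.length := by omega
  refine ⟨v, v.drop k, hv, ?_, ?_⟩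
  · rw [hwv, List.take_append_of_le_length hkv]
    exact (List.take_append_drop k v).symm
  · rw [List.length_drop]; omega
end
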